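/- arXiv:0903.1604 — 7 statements merged into one kernel-verified Lean document; each statement's English description precedes it below -/
import Mathlib

section
/- If M is an n×n Manin matrix over a noncommutative unital ring, then for every permutation p of {1,…,n}, the column determinant computed with columns taken in the order p(1),…,p(n) equals the column determinant computed in the standard column order: Σ_{σ∈S_n} sgn(σ) M_{σ(p(1)),p(1)}⋯M_{σ(p(n)),p(n)} = Σ_{σ∈S_n} sgn(σ) M_{σ(1),1}⋯M_{σ(n),n}. -/
/-!
Adjacent transpositions generate the symmetric group, so it suffices to swap two adjacent
entries of the column order, holding columns `a` and `b`. The difference of the two column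
determinants is `∑ σ, sgn σ • f σ` with `f σ` invariant under `σ ↦ σ * swap a b`, hence zero:
the four words involved differ only in the two adjacent factors, and with `A = M (σ a) a`,
`B = M (σ b) b`, `A' = M (σ b) a`, `B' = M (σ a) b` the invariance is the cross relation
`A * B - B * A = A' * B' - B' * A'`.
-/

open Equiv

/-- The column determinant of an `n × n` matrix over a noncommutative ring, computed with
the columns taken (left to right) in the order `p 0, p 1, …, p (n-1)`. -/
def detColOrder {R : Type*} [Ring R] {n : ℕ} (p : Equiv.Perm (Fin n))
    (M : Matrix (Fin n) (Fin n) R) : R :=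
  ∑ σ : Equiv.Perm (Fin n),
    (Equiv.Perm.sign σ : ℤ) • (List.ofFn fun t => M (σ (p t)) (p t)).prod

theorem Equiv.Perm.sum_sign_smul_eq_zero_of_mul_swap {α G : Type*} [DecidableEq α] [Fintype α]
    [AddCommGroup G] {f : Perm α → G} {a b : α} (hab : a ≠ b)
    (hf : ∀ σ, f (σ * swap a b) = f σ) :
    ∑ σ, (sign σ : ℤ) • f σ = 0 :=
  Finset.sum_involution (fun σ _ => σ * swap a b)
    (fun σ _ => by simp [hf, sign_mul, sign_swap hab])
    (fun σ _ _ => (not_congr mul_swap_eq_iff).mpr hab) (fun _ _ => Finset.mem_univ _)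
    fun σ _ => mul_swap_involutive a b σ

theorem List.prod_ofFn_eq_prod_take_mul_mul_prod_drop {M : Type*} [Monoid M] {m : ℕ}
    (f g : Fin (m + 1) → M) (i : Fin m)
    (hfg : ∀ t, t ≠ i.castSucc → t ≠ i.succ → f t = g t) :
    (List.ofFn f).prod =
      ((List.ofFn g).take i).prod * (f i.castSucc * f i.succ) *
        ((List.ofFn g).drop (i + 2)).prod := by
  have hsplit :
      (List.ofFn f).drop i = f i.castSucc :: f i.succ :: (List.ofFn f).drop (i + 2) := by
    rw [List.drop_eq_getElem_cons (by simp), List.drop_eq_getElem_cons (by simp)]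
    simp only [List.getElem_ofFn]
    rfl
  have htake : (List.ofFn f).take i = (List.ofFn g).take i := by
    refine List.ext_getElem (by simp) fun j hj _ => ?_
    simp only [List.getElem_take, List.getElem_ofFn]
    simp only [List.length_take, List.length_ofFn] at hj
    exact hfg _ (by simp [Fin.ext_iff]; omega) (by simp [Fin.ext_iff]; omega)
  have hdrop : (List.ofFn f).drop (i + 2) = (List.ofFn g).drop (i + 2) := by
    refine List.ext_getElem (by simp) fun j _ _ => ?_
    simp only [List.getElem_drop, List.getElem_ofFn]
    exact hfg _ (by simp [Fin.ext_iff]; omega) (by simp [Fin.ext_iff]; omega)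
  rw [← List.prod_take_mul_prod_drop _ i, hsplit, htake, hdrop]
  simp [mul_assoc]

theorem detColOrder_mul_swap_castSucc_succ {R : Type*} [Ring R] {m : ℕ}
    (M : Matrix (Fin (m + 1)) (Fin (m + 1)) R)
    (hcross : ∀ i j k l, M i j * M k l - M k l * M i j = M k j * M i l - M i l * M k j)
    (q : Perm (Fin (m + 1))) (i : Fin m) :
    detColOrder (q * swap i.castSucc i.succ) M = detColOrder q M := by
  have hcs : i.castSucc ≠ i.succ := Fin.castSucc_lt_succ.ne
  have hab : q i.castSucc ≠ q i.succ := q.injective.ne hcs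
  rw [← sub_eq_zero, detColOrder, detColOrder, ← Finset.sum_sub_distrib]
  simp_rw [← smul_sub]
  refine Perm.sum_sign_smul_eq_zero_of_mul_swap hab fun σ => ?_
  have hsplit := List.prod_ofFn_eq_prod_take_mul_mul_prod_drop
    (g := fun t => M (σ (q t)) (q t)) (i := i)
  rw [hsplit, hsplit, hsplit, hsplit]
  · simp only [Perm.mul_apply, swap_apply_left, swap_apply_right, ← mul_sub, ← sub_mul]
    congr 2
    rw [← neg_sub (M (σ (q i.succ)) (q i.castSucc) * M (σ (q i.castSucc)) (q i.succ)),
      ← hcross, neg_sub]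
  all_goals
    intro t htc hts
    simp [swap_apply_of_ne_of_ne htc hts,
      swap_apply_of_ne_of_ne (q.injective.ne htc) (q.injective.ne hts)]

theorem manin_detCol_column_order_invariant_general
    {R : Type*} [Ring R] {n : ℕ} (M : Matrix (Fin n) (Fin n) R)
    (hcross : ∀ i j k l, M i j * M k l - M k l * M i j = M k j * M i l - M i l * M k j)
    (p : Equiv.Perm (Fin n)) :
    detColOrder p M = detColOrder 1 M := by
  cases n with
  | zero => rw [Subsingleton.elim p 1]
  | succ m =>
    have hp : p ∈ Submonoid.closure (Set.range fun i : Fin m ↦ swap i.castSucc i.succ) := by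
      rw [Perm.mclosure_swap_castSucc_succ]
      trivial
    induction hp using Submonoid.closure_induction_right with
    | one => rfl
    | mul_right q _ _ hswap ih =>
      obtain ⟨i, rfl⟩ := hswap
      rw [detColOrder_mul_swap_castSucc_succ M hcross, ih]

/-- For a Manin matrix `M` (entries in the same column commute, and cross-commutators of any
2×2 submatrix agree), the column determinant does not depend on the order of the columns in
the column expansion: for every permutation `p`,
`∑_σ sgn σ · M_{σ(p 1),p 1} ⋯ M_{σ(p n),p n} = ∑_σ sgn σ · M_{σ(1),1} ⋯ M_{σ(n),n}`. -/
theorem manin_detCol_column_order_invariant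
    {R : Type*} [Ring R] {n : ℕ} (M : Matrix (Fin n) (Fin n) R)
    (hcol : ∀ i k j, Commute (M i j) (M k j))
    (hcross : ∀ i j k l, M i j * M k l - M k l * M i j = M k j * M i l - M i l * M k j)
    (p : Equiv.Perm (Fin n)) :
    detColOrder p M = detColOrder 1 M :=
  manin_detCol_column_order_invariant_general M hcross p
end

section
/- For an n×n Manin matrix M, swapping two rows yields again a Manin matrix, and the column determinant changes sign: det^col(M with rows i and j exchanged) = −det^col(M). -/
/-- The column determinant of an `n × n` matrix over a noncommutative ring:
`det^col M = ∑_σ sgn σ · M_{σ(1),1} M_{σ(2),2} ⋯ M_{σ(n),n}` (product left to right). -/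
def detCol {R : Type*} [Ring R] {n : ℕ} (M : Matrix (Fin n) (Fin n) R) : R :=
  ∑ σ : Equiv.Perm (Fin n),
    (Equiv.Perm.sign σ : ℤ) • (List.ofFn fun t => M (σ t) t).prod

/-!
Both Manin conditions quantify over all row indices, so they survive any reindexing of the
rows. For the column determinant, permuting the rows by `τ` amounts to substituting `τ * σ`
for `σ`, which multiplies every sign by `sign τ`.
-/

open Equiv Equiv.Perm

namespace Matrix

variable {R : Type*} [Ring R]

def IsManin {m n : Type*} (M : Matrix m n R) : Prop :=
  (∀ i k j, Commute (M i j) (M k j)) ∧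
    ∀ i j k l, M i j * M k l - M k l * M i j = M k j * M i l - M i l * M k j

theorem IsManin.submatrix_rows {m m' n : Type*} {M : Matrix m n R} (hM : M.IsManin)
    (f : m' → m) : (M.submatrix f id).IsManin :=
  ⟨fun i k j => hM.1 (f i) (f k) j, fun i j k l => hM.2 (f i) j (f k) l⟩

end Matrix

theorem detCol_submatrix_perm {R : Type*} [Ring R] {n : ℕ} (M : Matrix (Fin n) (Fin n) R)
    (τ : Perm (Fin n)) : detCol (M.submatrix τ id) = (sign τ : ℤ) • detCol M := by
  unfold detCol
  rw [Finset.smul_sum]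
  refine Fintype.sum_equiv (Equiv.mulLeft τ) _ _ fun σ => ?_
  have hsign : sign σ = sign τ * sign (τ * σ) := by
    rw [Perm.sign_mul, ← mul_assoc, Int.units_mul_self, one_mul]
  rw [hsign, Units.val_mul, mul_smul]
  rfl

theorem detCol_submatrix_swap {R : Type*} [Ring R] {n : ℕ} (M : Matrix (Fin n) (Fin n) R)
    {i j : Fin n} (hij : i ≠ j) : detCol (M.submatrix (swap i j) id) = -detCol M := by
  rw [detCol_submatrix_perm, sign_swap hij, Units.val_neg, Units.val_one, neg_one_smul]

/-- For an `n × n` Manin matrix `M`, exchanging two (distinct) rows `i` and `j` yields again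
a Manin matrix, and the column determinant changes sign:
`det^col (M with rows i, j exchanged) = - det^col M`. -/
theorem manin_row_swap
    {R : Type*} [Ring R] {n : ℕ} (M : Matrix (Fin n) (Fin n) R)
    (hcol : ∀ i k j, Commute (M i j) (M k j))
    (hcross : ∀ i j k l, M i j * M k l - M k l * M i j = M k j * M i l - M i l * M k j)
    (i j : Fin n) (hij : i ≠ j) (M' : Matrix (Fin n) (Fin n) R)
    (hM' : M' = M.submatrix (Equiv.swap i j) id) :
    ((∀ i' k' j', Commute (M' i' j') (M' k' j')) ∧
      (∀ i' j' k' l', M' i' j' * M' k' l' - M' k' l' * M' i' j' =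
        M' k' j' * M' i' l' - M' i' l' * M' k' j')) ∧
    detCol M' = - detCol M := by
  subst hM'
  have hManin : M.IsManin := ⟨hcol, hcross⟩
  exact ⟨hManin.submatrix_rows _, detCol_submatrix_swap M hij⟩
end

section
/- If an n×n Manin matrix M has two equal columns, then det^col(M) = 0. -/
open Equiv Equiv.Perm

theorem Finset.sum_eq_zero_of_add_mul_swap {α M : Type*} [DecidableEq α] [Fintype α]
    [AddCommMonoid M] {f : Perm α → M} {x y : α} (hxy : x ≠ y)
    (h : ∀ σ, f σ + f (σ * swap x y) = 0) : ∑ σ, f σ = 0 :=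
  Finset.sum_ninvolution (· * swap x y) h
    (fun _ _ hσ => hxy (swap_eq_one_iff.mp (mul_eq_left.mp hσ)))
    (fun _ => Finset.mem_univ _) (fun σ => by simp [mul_assoc])

theorem List.exists_prod_ofFn_eq_mul_adjacent_mul {M : Type*} [Monoid M] {m : ℕ}
    (f : Fin (m + 1) → M) (i : Fin m) :
    ∃ a b : M, ∀ g : Fin (m + 1) → M, (∀ t, t ≠ i.castSucc → t ≠ i.succ → g t = f t) →
      (List.ofFn g).prod = a * (g i.castSucc * g i.succ) * b := by
  refine ⟨((List.ofFn f).take i).prod, ((List.ofFn f).drop (i + 2)).prod, fun g hg => ?_⟩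
  have htake : (List.ofFn g).take i = (List.ofFn f).take i :=
    List.ext_getElem (by simp) fun k hk _ => by
      simp only [List.length_take, List.length_ofFn] at hk
      simp only [List.getElem_take, List.getElem_ofFn]
      exact hg _ (Fin.ne_of_val_ne (by simp; omega)) (Fin.ne_of_val_ne (by simp; omega))
  have hdrop : (List.ofFn g).drop (i + 2) = (List.ofFn f).drop (i + 2) :=
    List.ext_getElem (by simp) fun k _ _ => by
      simp only [List.getElem_drop, List.getElem_ofFn]
      exact hg _ (Fin.ne_of_val_ne (by simp; omega)) (Fin.ne_of_val_ne (by simp; omega))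
  have hmid : (List.ofFn g).drop i = g i.castSucc :: g i.succ :: (List.ofFn g).drop (i + 2) := by
    rw [List.drop_eq_getElem_cons (by simp), List.drop_eq_getElem_cons (by simp)]
    simp only [List.getElem_ofFn]
    rfl
  rw [← List.prod_take_mul_prod_drop (List.ofFn g) i, hmid, htake, hdrop]
  simp [mul_assoc]

section

variable {R : Type*} [Ring R] {m : ℕ}

theorem detCol_eq_zero_of_adjacent_cols_eq (M : Matrix (Fin (m + 1)) (Fin (m + 1)) R)
    (hcol : ∀ i k j, Commute (M i j) (M k j)) (i : Fin m)
    (heq : ∀ k, M k i.castSucc = M k i.succ) : detCol M = 0 := by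
  have hne : i.castSucc ≠ i.succ := Fin.castSucc_lt_succ.ne
  refine Finset.sum_eq_zero_of_add_mul_swap hne fun σ => ?_
  obtain ⟨a, b, hprod⟩ := List.exists_prod_ofFn_eq_mul_adjacent_mul (fun t => M (σ t) t) i
  rw [hprod _ fun _ _ _ => rfl, hprod _ fun t h₁ h₂ => by simp [swap_apply_of_ne_of_ne h₁ h₂]]
  simp [Perm.sign_mul, sign_swap hne, ← heq, (hcol _ _ _).eq]

theorem detCol_submatrix_swap_adjacent (M : Matrix (Fin (m + 1)) (Fin (m + 1)) R)
    (hcross : ∀ i j k l, M i j * M k l - M k l * M i j = M k j * M i l - M i l * M k j)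
    (i : Fin m) : detCol (M.submatrix id (swap i.castSucc i.succ)) = -detCol M := by
  have hne : i.castSucc ≠ i.succ := Fin.castSucc_lt_succ.ne
  rw [eq_neg_iff_add_eq_zero, detCol, detCol, ← Finset.sum_add_distrib]
  refine Finset.sum_eq_zero_of_add_mul_swap hne fun σ => ?_
  obtain ⟨a, b, hprod⟩ := List.exists_prod_ofFn_eq_mul_adjacent_mul (fun t => M (σ t) t) i
  rw [hprod _ fun _ _ _ => rfl, hprod _ fun t h₁ h₂ => by simp [swap_apply_of_ne_of_ne h₁ h₂],
    hprod _ fun t h₁ h₂ => by simp [swap_apply_of_ne_of_ne h₁ h₂],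
    hprod _ fun t h₁ h₂ => by simp [swap_apply_of_ne_of_ne h₁ h₂]]
  have hkey := congr((sign σ : ℤ) • (a * $(sub_eq_zero.mpr
    (hcross (σ i.castSucc) i.castSucc (σ i.succ) i.succ)) * b))
  simp only [mul_sub, sub_mul, smul_sub, mul_zero, zero_mul, smul_zero] at hkey
  simp only [Matrix.submatrix_apply, id, Perm.mul_apply, swap_apply_left, swap_apply_right,
    Perm.sign_mul, sign_swap hne, mul_neg, mul_one, Units.val_neg, neg_smul]
  convert hkey using 1
  abel

theorem detCol_eq_zero_of_cols_eq_of_lt (M : Matrix (Fin (m + 1)) (Fin (m + 1)) R)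
    (hcol : ∀ i k j, Commute (M i j) (M k j))
    (hcross : ∀ i j k l, M i j * M k l - M k l * M i j = M k j * M i l - M i l * M k j)
    {j₁ j₂ : Fin (m + 1)} (hlt : j₁ < j₂) (heq : ∀ k, M k j₁ = M k j₂) : detCol M = 0 := by
  induction j₂ using Fin.induction generalizing M with
  | zero => exact absurd hlt (Fin.not_lt_zero _)
  | succ i ih =>
    obtain rfl | hlt' := (Fin.le_castSucc_iff.mpr hlt).eq_or_lt
    · exact detCol_eq_zero_of_adjacent_cols_eq M hcol i heq
    · have hswap : detCol (M.submatrix id (swap i.castSucc i.succ)) = 0 :=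
        ih _ (fun _ _ _ => hcol _ _ _) (fun _ _ _ _ => hcross _ _ _ _) hlt' fun k => by
          simp [swap_apply_of_ne_of_ne hlt'.ne (hlt'.trans Fin.castSucc_lt_succ).ne, heq]
      rwa [detCol_submatrix_swap_adjacent M hcross, neg_eq_zero] at hswap

end

/-- If an `n × n` Manin matrix has two equal columns, then its column determinant
vanishes. -/
theorem manin_detCol_eq_zero_of_eq_columns
    {R : Type*} [Ring R] {n : ℕ} (M : Matrix (Fin n) (Fin n) R)
    (hcol : ∀ i k j, Commute (M i j) (M k j))
    (hcross : ∀ i j k l, M i j * M k l - M k l * M i j = M k j * M i l - M i l * M k j)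
    (j₁ j₂ : Fin n) (hj : j₁ ≠ j₂) (heq : ∀ i, M i j₁ = M i j₂) :
    detCol M = 0 := by
  cases n with
  | zero => exact j₁.elim0
  | succ m =>
    rcases hj.lt_or_gt with hlt | hgt
    · exact detCol_eq_zero_of_cols_eq_of_lt M hcol hcross hlt heq
    · exact detCol_eq_zero_of_cols_eq_of_lt M hcol hcross hgt fun i => (heq i).symm
end

section
/- If M is a Manin matrix over a noncommutative unital ring and M is invertible (two-sided inverse exists), and det^col(M) is invertible, then M^{-1} is again a Manin matrix. -/
/-- A (column) Manin matrix: entries in the same column commute, and cross-commutators of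
any 2×2 submatrix agree. -/
def IsManin {R : Type*} [Ring R] {I J : Type*} (M : Matrix I J R) : Prop :=
  (∀ i k j, Commute (M i j) (M k j)) ∧
  ∀ i j k l, M i j * M k l - M k l * M i j = M k j * M i l - M i l * M k j

/-!
Grassmann variables `θ_i` commuting with `R` live in `⋀(ℤⁿ) ⊗ R`. For `ψ = θ M`, the Manin
relations for `M` say that the `ψ_j` anticommute and square to zero, while `M N = 1`
gives `θ = ψ N`. Fix `b ≠ d` and let `P` be the product of the `ψ_j` with `j ∉ {b, d}`. Expanding
`θ_a` and `θ_c` in the `ψ_j`, only `ψ_b` and `ψ_d` survive next to `P`, and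
`P θ_a θ_c = P ψ_b ψ_d (N_dc N_ba - N_bc N_da)`. Up to sign, `P ψ_b ψ_d` is the ordered product
`ψ_1 ⋯ ψ_n = θ_1 ⋯ θ_n det^col M`, so invertibility of `det^col M` lets us read off the scalar;
then `θ_a θ_c = -θ_c θ_a` and `θ_a² = 0` become the Manin relations for `N`.
-/

open TensorProduct ExteriorAlgebra
open Algebra.TensorProduct (includeRight includeRight_apply tmul_mul_tmul)

section Anticommuting

variable {A ι : Type*} [Ring A] {g : ι → A}

theorem List.prod_map_mul_eq_neg_one_pow_smul (hg : ∀ i j, g i * g j = -(g j * g i))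
    (l : List ι) (x : ι) :
    (l.map g).prod * g x = (-1 : ℤ) ^ l.length • (g x * (l.map g).prod) := by
  induction l with
  | nil => simp
  | cons a l ih =>
    rw [List.map_cons, List.prod_cons, mul_assoc, ih, mul_smul_comm, ← mul_assoc, hg,
      List.length_cons, pow_succ, mul_comm, mul_smul]
    simp [mul_assoc]

theorem List.mul_prod_map_eq_zero_of_mem (hg : ∀ i j, g i * g j = -(g j * g i))
    (hsq : ∀ i, g i * g i = 0) {l : List ι} {x : ι} (hx : x ∈ l) :
    g x * (l.map g).prod = 0 := by
  induction l with
  | nil => simp at hx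
  | cons a l ih =>
    rw [List.map_cons, List.prod_cons, ← mul_assoc]
    rcases List.mem_cons.1 hx with rfl | hx
    · rw [hsq, zero_mul]
    · rw [hg, neg_mul, mul_assoc, ih hx, mul_zero, neg_zero]

theorem List.prod_map_mul_eq_zero_of_mem (hg : ∀ i j, g i * g j = -(g j * g i))
    (hsq : ∀ i, g i * g i = 0) {l : List ι} {x : ι} (hx : x ∈ l) :
    (l.map g).prod * g x = 0 := by
  rw [List.prod_map_mul_eq_neg_one_pow_smul hg, List.mul_prod_map_eq_zero_of_mem hg hsq hx,
    smul_zero]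

theorem List.Perm.prod_map_eq_units_smul (hg : ∀ i j, g i * g j = -(g j * g i))
    {l l' : List ι} (h : l.Perm l') : ∃ ε : ℤˣ, (l.map g).prod = ε • (l'.map g).prod := by
  induction h with
  | nil => exact ⟨1, by simp⟩
  | cons a _ ih =>
    obtain ⟨ε, hε⟩ := ih
    exact ⟨ε, by rw [List.map_cons, List.map_cons, List.prod_cons, List.prod_cons, hε,
      mul_smul_comm]⟩
  | swap x y l =>
    refine ⟨-1, ?_⟩
    simp only [List.map_cons, List.prod_cons, ← mul_assoc, hg y x]
    simp
  | trans _ _ ih₁ ih₂ =>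
    obtain ⟨ε₁, h₁⟩ := ih₁
    obtain ⟨ε₂, h₂⟩ := ih₂
    exact ⟨ε₁ * ε₂, by rw [h₁, h₂, mul_smul]⟩

end Anticommuting

theorem Fintype.sum_sum_eq_zero_of_antisymm {ι M : Type*} [Fintype ι] [AddCommGroup M]
    (f : ι → ι → M) (hf : ∀ i k, f k i = -f i k) (hdiag : ∀ i, f i i = 0) :
    ∑ i, ∑ k, f i k = 0 := by
  rw [← Fintype.sum_prod_type']
  refine Finset.sum_involution (fun p _ => p.swap) (fun p _ => by
    rw [Prod.fst_swap, Prod.snd_swap, hf, neg_add_cancel]) ?_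
    (fun _ _ => Finset.mem_univ _) (fun _ _ => rfl)
  rintro ⟨i, k⟩ _ hne heq
  obtain rfl : k = i := congrArg Prod.fst heq
  exact hne (hdiag k)

theorem Fintype.sum_eq_sum_perm_of_not_injective {α M : Type*} [Fintype α] [DecidableEq α]
    [AddCommMonoid M] (F : (α → α) → M) (hF : ∀ f, ¬ Function.Injective f → F f = 0) :
    ∑ f, F f = ∑ σ : Equiv.Perm α, F σ := by
  refine (Fintype.sum_of_injective _ Equiv.coe_fn_injective _ _ (fun f hf => hF f ?_)
    (fun _ => rfl)).symm
  intro hinj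
  exact hf ⟨Equiv.ofBijective f (Finite.injective_iff_bijective.1 hinj), rfl⟩

theorem List.prod_ofFn_tmul {S A B : Type*} [CommSemiring S] [Semiring A] [Semiring B] [Algebra S A]
    [Algebra S B] {m : ℕ} (a : Fin m → A) (b : Fin m → B) :
    (List.ofFn fun t => a t ⊗ₜ[S] b t).prod = (List.ofFn a).prod ⊗ₜ (List.ofFn b).prod := by
  induction m with
  | zero => simp [Algebra.TensorProduct.one_def]
  | succ m ih =>
    simp only [List.ofFn_succ, List.prod_cons, ih, tmul_mul_tmul]

theorem List.exists_perm_append_pair {α : Type*} [DecidableEq α] {L : List α} (hL : L.Nodup)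
    {b d : α} (hb : b ∈ L) (hd : d ∈ L) (hbd : b ≠ d) : ∃ l, (l ++ [b, d]).Perm L := by
  refine ⟨(L.erase b).erase d, List.perm_append_comm.trans ?_⟩
  have hd' : d ∈ L.erase b := (hL.mem_erase_iff).2 ⟨hbd.symm, hd⟩
  exact ((List.perm_cons_erase hd').symm.cons b).trans (List.perm_cons_erase hb).symm

namespace Manin

variable {R : Type*} [Ring R] {n : ℕ}

noncomputable def grassVar (i : Fin n) : ExteriorAlgebra ℤ (Fin n → ℤ) :=
  ι ℤ (Pi.basisFun ℤ (Fin n) i)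

theorem grassVar_mul_anticomm (i j : Fin n) :
    grassVar i * grassVar j = -(grassVar j * grassVar i) :=
  eq_neg_of_add_eq_zero_left (ι_add_mul_swap _ _)

theorem grassVar_mul_self (i : Fin n) : grassVar i * grassVar i = 0 := ι_sq_zero _

noncomputable def topCoeff (n : ℕ) : ExteriorAlgebra ℤ (Fin n → ℤ) →ₗ[ℤ] ℤ :=
  (Pi.basisFun ℤ (Fin n)).ExteriorAlgebra.coord Finset.univ

theorem topCoeff_prod_grassVar : topCoeff n (List.ofFn grassVar).prod = 1 := by
  have htop :
      (Pi.basisFun ℤ (Fin n)).ExteriorAlgebra Finset.univ = (List.ofFn grassVar).prod := by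
    rw [ExteriorAlgebra.basis_apply_ofCard _ (Finset.card_fin n), ExteriorAlgebra.ιMulti_family,
      (Set.powersetCard.ofFinEmbEquiv.symm _).strictMono.eq_id, Function.comp_id, ιMulti_apply]
    rfl
  rw [topCoeff, ← htop, Module.Basis.coord_apply, Module.Basis.repr_self, Finsupp.single_eq_same]

theorem eq_zero_of_prod_grassVar_tmul_eq_zero {x : R}
    (h : (List.ofFn grassVar).prod ⊗ₜ[ℤ] x = (0 : ExteriorAlgebra ℤ (Fin n → ℤ) ⊗[ℤ] R)) :
    x = 0 := by
  have := congrArg (TensorProduct.lid ℤ R ∘ (topCoeff n).rTensor R) h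
  simpa [topCoeff_prod_grassVar] using this

noncomputable def grassVarMul (M : Matrix (Fin n) (Fin n) R) (j : Fin n) :
    ExteriorAlgebra ℤ (Fin n → ℤ) ⊗[ℤ] R :=
  ∑ i, grassVar i ⊗ₜ M i j

theorem prod_ofFn_grassVar {m : ℕ} (f : Fin m → Fin n) :
    (List.ofFn fun t => grassVar (f t)).prod = ιMulti ℤ m (Pi.basisFun ℤ (Fin n) ∘ f) := by
  rw [ιMulti_apply]
  rfl

theorem grassVarMul_mul_grassVarMul (M : Matrix (Fin n) (Fin n) R) (j l : Fin n) :
    grassVarMul M j * grassVarMul M l =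
      ∑ i, ∑ k, (grassVar i * grassVar k) ⊗ₜ (M i j * M k l) := by
  simp only [grassVarMul, Finset.sum_mul_sum, tmul_mul_tmul]

theorem grassVarMul_mul_self {M : Matrix (Fin n) (Fin n) R}
    (hM : ∀ i k j, Commute (M i j) (M k j)) (j : Fin n) :
    grassVarMul M j * grassVarMul M j = 0 := by
  rw [grassVarMul_mul_grassVarMul]
  refine Fintype.sum_sum_eq_zero_of_antisymm _ (fun i k => ?_) (fun i => ?_)
  · rw [grassVar_mul_anticomm, (hM k i j).eq, neg_tmul]
  · rw [grassVar_mul_self, zero_tmul]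

theorem grassVarMul_mul_anticomm {M : Matrix (Fin n) (Fin n) R}
    (hM : ∀ i j k l, M i j * M k l - M k l * M i j = M k j * M i l - M i l * M k j)
    (j l : Fin n) :
    grassVarMul M j * grassVarMul M l = -(grassVarMul M l * grassVarMul M j) := by
  refine eq_neg_of_add_eq_zero_left ?_
  rw [grassVarMul_mul_grassVarMul, grassVarMul_mul_grassVarMul, ← Finset.sum_add_distrib]
  simp only [← Finset.sum_add_distrib, ← tmul_add]
  refine Fintype.sum_sum_eq_zero_of_antisymm _ (fun i k => ?_) (fun i => ?_)
  · have hswap := sub_eq_sub_iff_add_eq_add.1 (hM i j k l)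
    rw [grassVar_mul_anticomm, ← hswap, neg_tmul]
  · rw [grassVar_mul_self, zero_tmul]

theorem grassVar_tmul_one_eq_sum {M N : Matrix (Fin n) (Fin n) R} (hMN : M * N = 1) (a : Fin n) :
    grassVar a ⊗ₜ[ℤ] (1 : R) = ∑ j, grassVarMul M j * includeRight (N j a) := by
  simp only [grassVarMul, includeRight_apply, Finset.sum_mul, tmul_mul_tmul, mul_one]
  rw [Finset.sum_comm]
  simp only [← tmul_sum, ← Matrix.mul_apply, hMN, Matrix.one_apply, tmul_ite]
  simp

theorem prod_ofFn_grassVarMul (M : Matrix (Fin n) (Fin n) R) :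
    (List.ofFn (grassVarMul M)).prod = (List.ofFn grassVar).prod ⊗ₜ detCol M := by
  classical
  have hexpand := (MultilinearMap.mkPiAlgebraFin ℤ n _).map_sum
    (fun t i => grassVar i ⊗ₜ[ℤ] M i t)
  simp only [MultilinearMap.mkPiAlgebraFin_apply] at hexpand
  rw [show grassVarMul M = fun t => ∑ i, grassVar i ⊗ₜ[ℤ] M i t from rfl, hexpand]
  simp only [List.prod_ofFn_tmul]
  rw [Fintype.sum_eq_sum_perm_of_not_injective]
  · rw [detCol, tmul_sum]
    refine Finset.sum_congr rfl fun σ _ => ?_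
    rw [prod_ofFn_grassVar, AlternatingMap.map_perm, Units.smul_def, smul_tmul, ιMulti_apply]
    rfl
  · intro f hf
    rw [prod_ofFn_grassVar, ιMulti_eq_zero_of_not_inj, zero_tmul]
    exact fun h => hf h.of_comp

section InverseRelations

variable {M N : Matrix (Fin n) (Fin n) R}

theorem prod_grassVarMul_mul_eq_single (hM : IsManin M) (hMN : M * N = 1) {l : List (Fin n)}
    {y : Fin n} (hl : ∀ j, j ≠ y → j ∈ l) (c : Fin n) :
    (l.map (grassVarMul M)).prod * (grassVar c ⊗ₜ 1) =
      (l.map (grassVarMul M)).prod * grassVarMul M y * includeRight (N y c) := by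
  rw [grassVar_tmul_one_eq_sum hMN, Finset.mul_sum, Fintype.sum_eq_single y, mul_assoc]
  intro j hj
  rw [← mul_assoc, List.prod_map_mul_eq_zero_of_mem (grassVarMul_mul_anticomm hM.2)
    (grassVarMul_mul_self hM.1) (hl j hj), zero_mul]

theorem prod_grassVarMul_mul_eq_add (hM : IsManin M) (hMN : M * N = 1) {l : List (Fin n)}
    {b d : Fin n} (hbd : b ≠ d) (hl : ∀ j, j ≠ b → j ≠ d → j ∈ l) (a : Fin n) :
    (l.map (grassVarMul M)).prod * (grassVar a ⊗ₜ 1) =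
      (l.map (grassVarMul M)).prod * grassVarMul M b * includeRight (N b a) +
        (l.map (grassVarMul M)).prod * grassVarMul M d * includeRight (N d a) := by
  rw [grassVar_tmul_one_eq_sum hMN, Finset.mul_sum, Fintype.sum_eq_add b d hbd, mul_assoc,
    mul_assoc]
  rintro j ⟨hjb, hjd⟩
  rw [← mul_assoc, List.prod_map_mul_eq_zero_of_mem (grassVarMul_mul_anticomm hM.2)
    (grassVarMul_mul_self hM.1) (hl j hjb hjd), zero_mul]

theorem prod_grassVarMul_mul_grassVar_mul_grassVar (hM : IsManin M) (hMN : M * N = 1)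
    {l : List (Fin n)} {b d : Fin n} (hl : (l ++ [b, d]).Perm (List.finRange n)) (a c : Fin n) :
    (l.map (grassVarMul M)).prod * (grassVar a ⊗ₜ 1) * (grassVar c ⊗ₜ 1) =
      (l.map (grassVarMul M)).prod * grassVarMul M b * grassVarMul M d *
        includeRight (N d c * N b a - N b c * N d a) := by
  have hmem : ∀ j, j ∈ l ∨ j = b ∨ j = d := fun j => by
    simpa using hl.mem_iff.2 (List.mem_finRange j)
  have hbd : b ≠ d := by
    simpa using (List.sublist_append_right l [b, d]).nodup (hl.nodup_iff.2 (List.nodup_finRange n))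
  set P := (l.map (grassVarMul M)).prod
  have hPb : ((l ++ [b]).map (grassVarMul M)).prod = P * grassVarMul M b := by simp [P]
  have hPd : ((l ++ [d]).map (grassVarMul M)).prod = P * grassVarMul M d := by simp [P]
  have hscalar (x : R) : includeRight x * (grassVar c ⊗ₜ[ℤ] (1 : R)) =
      (grassVar c ⊗ₜ 1) * includeRight x :=
    ((Commute.one_right (grassVar c)).tmul (Commute.one_left x)).eq.symm
  have hb := prod_grassVarMul_mul_eq_single hM hMN (l := l ++ [b]) (y := d) (fun j hj => by
    rcases hmem j with h | rfl | rfl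
    exacts [List.mem_append_left _ h, List.mem_append_right _ (List.mem_singleton_self _),
      absurd rfl hj]) c
  have hd := prod_grassVarMul_mul_eq_single hM hMN (l := l ++ [d]) (y := b) (fun j hj => by
    rcases hmem j with h | rfl | rfl
    exacts [List.mem_append_left _ h, absurd rfl hj,
      List.mem_append_right _ (List.mem_singleton_self _)]) c
  rw [hPb] at hb
  rw [hPd, mul_assoc P (grassVarMul M d) (grassVarMul M b), grassVarMul_mul_anticomm hM.2 d b,
    mul_neg P (grassVarMul M b * grassVarMul M d)] at hd
  rw [prod_grassVarMul_mul_eq_add hM hMN hbd (fun j hjb hjd => by simpa [hjb, hjd] using hmem j) a,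
    add_mul, mul_assoc _ (includeRight _), mul_assoc _ (includeRight _), hscalar, hscalar,
    ← mul_assoc, ← mul_assoc, hb, hd]
  simp only [mul_assoc, map_sub, map_mul, mul_sub, neg_mul, ← sub_eq_add_neg]

theorem eq_zero_of_prod_mul_includeRight_eq_zero (hM : IsManin M)
    (hdet : IsUnit (detCol M)) {l : List (Fin n)} {b d : Fin n}
    (hl : (l ++ [b, d]).Perm (List.finRange n)) {x : R}
    (h : (l.map (grassVarMul M)).prod * grassVarMul M b * grassVarMul M d * includeRight x = 0) :
    x = 0 := by
  obtain ⟨ε, hε⟩ := hl.prod_map_eq_units_smul (grassVarMul_mul_anticomm hM.2)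
  rw [← List.ofFn_eq_map, prod_ofFn_grassVarMul] at hε
  have hprod : (l.map (grassVarMul M)).prod * grassVarMul M b * grassVarMul M d =
      ((l ++ [b, d]).map (grassVarMul M)).prod := by
    simp [mul_assoc]
  rw [hprod, hε, smul_mul_assoc, includeRight_apply, tmul_mul_tmul, mul_one,
    smul_eq_zero_iff_eq] at h
  exact (hdet.mul_right_eq_zero).1 (eq_zero_of_prod_grassVar_tmul_eq_zero h)

theorem commute_apply_of_mul_eq_one (hM : IsManin M) (hMN : M * N = 1) (hdet : IsUnit (detCol M))
    (i k j : Fin n) : Commute (N i j) (N k j) := by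
  rcases eq_or_ne i k with rfl | hik
  · exact Commute.refl _
  obtain ⟨l, hl⟩ := List.exists_perm_append_pair (List.nodup_finRange n) (List.mem_finRange i)
    (List.mem_finRange k) hik
  have h := prod_grassVarMul_mul_grassVar_mul_grassVar hM hMN hl j j
  rw [mul_assoc _ (grassVar j ⊗ₜ 1), tmul_mul_tmul, grassVar_mul_self,
    zero_tmul, mul_zero] at h
  exact (sub_eq_zero.1 (eq_zero_of_prod_mul_includeRight_eq_zero hM hdet hl h.symm)).symm

theorem commutator_eq_of_mul_eq_one (hM : IsManin M) (hMN : M * N = 1) (hdet : IsUnit (detCol M))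
    (i j k l : Fin n) : N i j * N k l - N k l * N i j = N k j * N i l - N i l * N k j := by
  rcases eq_or_ne k i with rfl | hki
  · rfl
  obtain ⟨L, hL⟩ := List.exists_perm_append_pair (List.nodup_finRange n) (List.mem_finRange k)
    (List.mem_finRange i) hki
  have h : (L.map (grassVarMul M)).prod * (grassVar l ⊗ₜ 1) * (grassVar j ⊗ₜ 1) +
      (L.map (grassVarMul M)).prod * (grassVar j ⊗ₜ 1) * (grassVar l ⊗ₜ 1) = 0 := by
    rw [mul_assoc, mul_assoc, ← mul_add, tmul_mul_tmul,
      tmul_mul_tmul, ← add_tmul, grassVar_mul_anticomm l j, neg_add_cancel,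
      zero_tmul, mul_zero]
  rw [prod_grassVarMul_mul_grassVar_mul_grassVar hM hMN hL,
    prod_grassVarMul_mul_grassVar_mul_grassVar hM hMN hL, ← mul_add, ← map_add] at h
  rw [← sub_eq_zero, ← eq_zero_of_prod_mul_includeRight_eq_zero hM hdet hL h]
  abel

end InverseRelations
end Manin

theorem manin_inv_isManin_general
    {R : Type*} [Ring R] {n : ℕ} (M N : Matrix (Fin n) (Fin n) R)
    (hM : IsManin M) (hMN : M * N = 1)
    (hdet : IsUnit (detCol M)) :
    IsManin N :=
  ⟨Manin.commute_apply_of_mul_eq_one hM hMN hdet, Manin.commutator_eq_of_mul_eq_one hM hMN hdet⟩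

/-- If `M` is a Manin matrix over a noncommutative unital ring which is invertible (a
two-sided inverse matrix `N` exists) and whose column determinant is invertible, then the
inverse matrix `M⁻¹ = N` is again a Manin matrix. -/
theorem manin_inv_isManin
    {R : Type*} [Ring R] {n : ℕ} (M N : Matrix (Fin n) (Fin n) R)
    (hM : IsManin M) (hMN : M * N = 1) (hNM : N * M = 1)
    (hdet : IsUnit (detCol M)) :
    IsManin N :=
  manin_inv_isManin_general M N hM hMN hdet
end

section
/- For any square matrix M over a (possibly noncommutative) ring with t a central variable, the trace of the adjugate of t+M (adjugate formed with column determinants) equals the t-derivative of the column determinant: Tr((t+M)^adj) = ∂_t det^col(t+M). -/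
/-- The adjugate of a square matrix over a noncommutative ring, formed from column
determinants of minors: its `(i,j)` entry is `(-1)^{i+j}` times the column determinant of
the minor obtained by deleting row `j` and column `i`. -/
def adjCol {R : Type*} [Ring R] {n : ℕ} (M : Matrix (Fin (n + 1)) (Fin (n + 1)) R) :
    Matrix (Fin (n + 1)) (Fin (n + 1)) R :=
  fun i j => ((-1 : ℤ) ^ ((i : ℕ) + (j : ℕ))) • detCol (M.submatrix j.succAbove i.succAbove)

/-!
Expand `det^col (t + M) = ∑ σ, sgn σ • ∏ₖ (t δ_{σk,k} + M_{σk,k})` as an ordered product. Since `t`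
is central, `∂_t` still satisfies the Leibniz rule on ordered products, so it differentiates one
factor at a time. The `k`-th factor has derivative `δ_{σk,k}`: only permutations fixing `k`
contribute, and for them the factor drops out of the product. Permutations of `Fin (n + 1)` fixing
`k` are the permutations of the other `n` indices, with the same sign, so the `k`-th contribution is
the column determinant of the principal minor at `k`, i.e. the `k`-th diagonal entry of the
adjugate.
-/

open Polynomial Equiv

theorem List.prod_ofFn_update_one {M : Type*} [Monoid M] :
    ∀ {n : ℕ} (f : Fin (n + 1) → M) (i : Fin (n + 1)),
      (List.ofFn (Function.update f i 1)).prod = (List.ofFn fun k => f (i.succAbove k)).prod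
  | 0, f, i => by
    rw [Fin.fin_one_eq_zero i]
    simp
  | n + 1, f, i => by
    cases i using Fin.cases with
    | zero => simp [List.ofFn_succ]
    | succ i =>
      have ih := List.prod_ofFn_update_one (Fin.tail f) i
      rw [List.ofFn_succ, ← Fin.tail_def, Fin.tail_update_succ, List.prod_cons, ih,
        List.ofFn_succ, List.prod_cons]
      simp [Fin.succ_succAbove_succ, Fin.tail, Function.update_of_ne (Fin.succ_ne_zero i).symm]

theorem List.prod_ofFn_update_zero {M₀ : Type*} [MonoidWithZero M₀] {n : ℕ}
    (f : Fin n → M₀) (i : Fin n) : (List.ofFn (Function.update f i 0)).prod = 0 :=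
  List.prod_eq_zero (List.mem_ofFn.mpr ⟨i, Function.update_self i 0 f⟩)

section Leibniz

variable {R : Type*} [Semiring R]

theorem Polynomial.derivative_prod_ofFn :
    ∀ {n : ℕ} (f : Fin n → R[X]),
      derivative (List.ofFn f).prod =
        ∑ i : Fin n, (List.ofFn (Function.update f i (derivative (f i)))).prod
  | 0, f => by simp
  | n + 1, f => by
    rw [List.ofFn_succ, List.prod_cons, derivative_mul, ← Fin.tail_def,
      derivative_prod_ofFn (Fin.tail f), Fin.sum_univ_succ, Finset.mul_sum]
    congr 1
    · simp [List.ofFn_succ, Fin.tail_def]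
    · refine Finset.sum_congr rfl fun i _ => ?_
      rw [List.ofFn_succ, ← Fin.tail_def, Fin.tail_update_succ, List.prod_cons,
        Function.update_of_ne (Fin.succ_ne_zero i).symm]
      rfl

theorem Polynomial.derivative_prod_ofFn_of_derivative_eq_ite {n : ℕ} (f : Fin (n + 1) → R[X])
    (p : Fin (n + 1) → Prop) [DecidablePred p]
    (hf : ∀ i, derivative (f i) = if p i then 1 else 0) :
    derivative (List.ofFn f).prod =
      ∑ i, if p i then (List.ofFn fun k => f (i.succAbove k)).prod else 0 := by
  rw [Polynomial.derivative_prod_ofFn]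
  refine Finset.sum_congr rfl fun i _ => ?_
  rw [hf i]
  split_ifs
  · exact List.prod_ofFn_update_one f i
  · exact List.prod_ofFn_update_zero f i

end Leibniz

namespace Equiv.Perm

variable {n : ℕ}

def fixingEquiv (j : Fin (n + 1)) : Perm (Fin n) ≃ {σ : Perm (Fin (n + 1)) // σ j = j} :=
  ((finSuccAboveEquiv j).permCongr.trans (Perm.subtypeEquivSubtypePerm (· ≠ j))).trans
    (subtypeEquivRight fun σ => by simp)

theorem fixingEquiv_apply_succAbove (j : Fin (n + 1)) (τ : Perm (Fin n)) (k : Fin n) :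
    (fixingEquiv j τ : Perm (Fin (n + 1))) (j.succAbove k) = j.succAbove (τ k) := by
  have hk : (⟨j.succAbove k, j.succAbove_ne k⟩ : {x // x ≠ j}) = finSuccAboveEquiv j k := rfl
  simp only [fixingEquiv, trans_apply, subtypeEquivRight_apply_coe,
    subtypeEquivSubtypePerm_apply_coe]
  rw [ofSubtype_apply_of_mem (p := (· ≠ j)) _ (j.succAbove_ne k), hk, permCongr_apply,
    symm_apply_apply]
  rfl

theorem sign_fixingEquiv (j : Fin (n + 1)) (τ : Perm (Fin n)) :
    sign (fixingEquiv j τ : Perm (Fin (n + 1))) = sign τ := by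
  simp [fixingEquiv, sign_ofSubtype, sign_permCongr]

theorem sum_ite_apply_eq_self {M : Type*} [AddCommMonoid M] (j : Fin (n + 1))
    (g : Perm (Fin (n + 1)) → M) :
    (∑ σ, if σ j = j then g σ else 0) = ∑ τ : Perm (Fin n), g (fixingEquiv j τ) := by
  rw [← Finset.sum_filter, Finset.sum_subtype (p := fun σ => σ j = j) _ (by simp)]
  exact ((fixingEquiv j).sum_comp fun σ => g σ).symm

end Equiv.Perm

section detCol

variable {R : Type*} [Ring R] {n : ℕ}

theorem trace_adjCol (A : Matrix (Fin (n + 1)) (Fin (n + 1)) R) :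
    (adjCol A).trace = ∑ j : Fin (n + 1), detCol (A.submatrix j.succAbove j.succAbove) := by
  refine Finset.sum_congr rfl fun j _ => ?_
  rw [Matrix.diag_apply, adjCol, ← two_mul, pow_mul, neg_one_sq, one_pow, one_smul]

theorem derivative_detCol_of_map_derivative_eq_one
    (A : Matrix (Fin (n + 1)) (Fin (n + 1)) R[X]) (hA : A.map derivative = 1) :
    derivative (detCol A) = ∑ j : Fin (n + 1), detCol (A.submatrix j.succAbove j.succAbove) := by
  have hentry : ∀ i k, derivative (A i k) = if i = k then 1 else 0 := fun i k => by
    rw [← Matrix.one_apply, ← hA, Matrix.map_apply]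
  have hterm : ∀ σ : Perm (Fin (n + 1)),
      derivative ((Perm.sign σ : ℤ) • (List.ofFn fun k => A (σ k) k).prod) =
        ∑ j : Fin (n + 1), if σ j = j then
          (Perm.sign σ : ℤ) • (List.ofFn fun k => A (σ (j.succAbove k)) (j.succAbove k)).prod
        else 0 := fun σ => by
    rw [map_zsmul, derivative_prod_ofFn_of_derivative_eq_ite _ (fun j => σ j = j)
      (fun j => hentry (σ j) j), Finset.smul_sum]
    simp only [smul_ite, smul_zero]
  simp only [detCol, map_sum, hterm]
  rw [Finset.sum_comm]
  refine Finset.sum_congr rfl fun j _ => ?_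
  rw [Perm.sum_ite_apply_eq_self j]
  simp only [Perm.fixingEquiv_apply_succAbove, Perm.sign_fixingEquiv, Matrix.submatrix_apply]

end detCol

/-- For any square matrix `M` over a (possibly noncommutative) unital ring, with `t` a
central variable (working in `R[t]`), the trace of the adjugate of `t·Id + M` (adjugate
formed with column determinants) equals the `t`-derivative of the column determinant:
`Tr ((t+M)^adj) = ∂_t det^col (t+M)`. -/
theorem trace_adjCol_eq_derivative_detCol
    {R : Type*} [Ring R] {n : ℕ} (M : Matrix (Fin (n + 1)) (Fin (n + 1)) R)
    (tM : Matrix (Fin (n + 1)) (Fin (n + 1)) (Polynomial R))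
    (htM : tM = fun i j => (if i = j then (Polynomial.X : Polynomial R) else 0) +
      Polynomial.C (M i j)) :
    Matrix.trace (adjCol tM) = Polynomial.derivative (detCol tM) := by
  have hderiv : tM.map derivative = 1 := by
    ext i j : 1
    rw [Matrix.map_apply, htM]
    by_cases h : i = j <;> simp [Matrix.one_apply, h]
  rw [trace_adjCol, derivative_detCol_of_map_derivative_eq_one tM hderiv]
end

section
/- Poisson commutativity of glued Gaudin families: on the product Lie–Poisson manifold gl(r)^{*N} with brackets {(X_i)_{ab}, (X_j)_{cd}} = δ_{ij}(δ_{cb}(X_i)_{ad} − δ_{ad}(X_i)_{cb}), any function h_2 that depends on X_1,…,X_k only through their sum and is built from spectral invariants of L_2(z)=Σ_{i=1}^k X_i/(z−z_i) + (Σ_{i=k+1}^N X_i)/(z−w), Poisson-commutes with any function h_1 invariant under the diagonal adjoint action of GL(r) and depending only on X_{k+1},…,X_N. In particular {Tr L_1(u)^m, Tr L_2(v)^n} = 0 for L_1(u)=Σ_{i=k+1}^N X_i/(u−u_i). -/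
open Matrix

noncomputable section

/-- The phase space `gl(r)^N`: `N`-tuples of `r × r` complex matrices, realized as nested
functions (so that the `Pi` normed-space structure is available for differentiation). -/
abbrev GaudinPhase (N r : ℕ) := Fin N → Fin r → Fin r → ℂ

/-- The coordinate direction on `gl(r)^N` corresponding to the matrix entry `(a,b)` of the
`i`-th matrix. -/
def gaudinBasis (N r : ℕ) (i : Fin N) (a b : Fin r) : GaudinPhase N r :=
  Pi.single i (Pi.single a (Pi.single b 1))

/-- The partial derivative `∂F/∂(X_i)_{ab}` of a function on `gl(r)^N`. -/
def gaudinPDeriv {N r : ℕ} (F : GaudinPhase N r → ℂ) (i : Fin N) (a b : Fin r)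
    (X : GaudinPhase N r) : ℂ :=
  fderiv ℂ F X (gaudinBasis N r i a b)

/-- The product Lie–Poisson bracket on `gl(r)^N`, determined by
`{(X_i)_{ab}, (X_j)_{cd}} = δ_{ij} (δ_{cb} (X_i)_{ad} - δ_{ad} (X_i)_{cb})`. -/
def gaudinPoisson {N r : ℕ} (F G : GaudinPhase N r → ℂ) (X : GaudinPhase N r) : ℂ :=
  ∑ i : Fin N, ∑ a : Fin r, ∑ b : Fin r, ∑ c : Fin r, ∑ d : Fin r,
    ((if c = b then X i a d else 0) - (if a = d then X i c b else 0)) *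
      gaudinPDeriv F i a b X * gaudinPDeriv G i c d X

/-- The first limiting Lax matrix `L₁(v) = ∑_{i>k} X i / (v - u i)` (sites `k+1, …, N`). -/
def glueLax₁ {N r : ℕ} (k : ℕ) (u : Fin N → ℂ) (v : ℂ) (X : GaudinPhase N r) :
    Matrix (Fin r) (Fin r) ℂ :=
  ∑ i ∈ Finset.univ.filter (fun i : Fin N => k ≤ (i : ℕ)), (v - u i)⁻¹ • Matrix.of (X i)

/-- The second limiting Lax matrix
`L₂(v) = ∑_{i≤k} X i / (v - z i) + (∑_{i>k} X i)/(v - w)`. -/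
def glueLax₂ {N r : ℕ} (k : ℕ) (z : Fin N → ℂ) (w : ℂ) (v : ℂ) (X : GaudinPhase N r) :
    Matrix (Fin r) (Fin r) ℂ :=
  (∑ i ∈ Finset.univ.filter (fun i : Fin N => (i : ℕ) < k), (v - z i)⁻¹ • Matrix.of (X i)) +
    (v - w)⁻¹ • ∑ i ∈ Finset.univ.filter (fun i : Fin N => k ≤ (i : ℕ)), Matrix.of (X i)

/-!
At each site the Lie–Poisson bracket pairs `dh₁` with the direction `⁅X_i, (∇_i h₂)ᵀ⁆`.
If `h₂` sees the sites `i > k` (numbered from 1) only through their sum, its gradient `Y` is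
the same at all of them, while `h₁` has no gradient at the sites `i ≤ k`; hence
`{h₁, h₂}(X) = dh₁(X)(X Y - Y X)` is the derivative of `h₁` along the infinitesimal diagonal
conjugation by `Y`, which vanishes by invariance. `L₂` sees the sites `i > k` only through
`∑_{i>k} X_i`, and `Tr L₁(u₀)^m` is conjugation invariant.
-/

open Filter Topology Finset

section Differentiation

variable {𝕜 E F : Type*} [NontriviallyNormedField 𝕜] [NormedAddCommGroup E] [NormedSpace 𝕜 E]
  [NormedAddCommGroup F] [NormedSpace 𝕜 F]

theorem fderiv_apply_eq_of_eventually_eq_on_lines {f : E → F} {x p q : E}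
    (hf : DifferentiableAt 𝕜 f x) (hpq : ∀ᶠ t : 𝕜 in 𝓝 0, f (x + t • p) = f (x + t • q)) :
    fderiv 𝕜 f x p = fderiv 𝕜 f x q := by
  rw [← hf.lineDeriv_eq_fderiv, ← hf.lineDeriv_eq_fderiv]
  exact Filter.EventuallyEq.deriv_eq hpq

theorem Differentiable.matrix_trace_pow {n : Type*} [Fintype n] [DecidableEq n]
    {A : E → Matrix n n 𝕜} (hA : ∀ a b, Differentiable 𝕜 fun x => A x a b) (m : ℕ) :
    Differentiable 𝕜 fun x => trace (A x ^ m) := by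
  have hpow : ∀ m a b, Differentiable 𝕜 fun x => (A x ^ m) a b := by
    intro m
    induction m with
    | zero => intro a b; simp only [pow_zero]; fun_prop
    | succ m ih =>
      intro a b
      simp only [pow_succ, mul_apply]
      exact Differentiable.fun_sum fun c _ => (ih a c).mul (hA c b)
  exact Differentiable.fun_sum fun a _ => hpow m a a

end Differentiation

theorem sum_lie_poisson_eq_sum_lie_mul {n R : Type*} [Fintype n] [DecidableEq n] [CommRing R]
    (M F G : Matrix n n R) :
    ∑ a, ∑ b, ∑ c, ∑ d,
        ((if c = b then M a d else 0) - (if a = d then M c b else 0)) * F a b * G c d =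
      ∑ a, ∑ b, ⁅M, Gᵀ⁆ a b * F a b := by
  refine sum_congr rfl fun a _ => sum_congr rfl fun b _ => ?_
  rw [Ring.lie_def, Matrix.sub_apply, mul_apply, mul_apply]
  simp only [sub_mul, ite_mul, zero_mul, sum_sub_distrib, sum_mul]
  rw [sum_comm (f := fun c d => if a = d then _ else _)]
  simp only [sum_ite_irrel, sum_const_zero, sum_ite_eq, sum_ite_eq', mem_univ, if_true]
  congr 1 <;> exact sum_congr rfl fun _ _ => by simp only [transpose_apply]; ring

section GaudinPhase

variable {N r : ℕ}

def DependsOnlyOn (S : Finset (Fin N)) (h : GaudinPhase N r → ℂ) : Prop :=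
  ∀ X Y : GaudinPhase N r, (∀ i ∈ S, X i = Y i) → h X = h Y

def DependsOnSumOver (S : Finset (Fin N)) (h : GaudinPhase N r → ℂ) : Prop :=
  ∀ X Y : GaudinPhase N r, (∀ i ∉ S, X i = Y i) → ∑ i ∈ S, X i = ∑ i ∈ S, Y i → h X = h Y

def IsConjInvariant (h : GaudinPhase N r → ℂ) : Prop :=
  ∀ (g : GL (Fin r) ℂ) (X : GaudinPhase N r),
    h (fun i a b => ((g : Matrix (Fin r) (Fin r) ℂ) * Matrix.of (X i) *
      ((g⁻¹ : GL (Fin r) ℂ) : Matrix (Fin r) (Fin r) ℂ)) a b) = h X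

def gaudinGrad (h : GaudinPhase N r → ℂ) (i : Fin N) (X : GaudinPhase N r) :
    Matrix (Fin r) (Fin r) ℂ :=
  of fun a b => gaudinPDeriv h i a b X

theorem sum_smul_gaudinBasis (V : GaudinPhase N r) :
    ∑ i, ∑ a, ∑ b, V i a b • gaudinBasis N r i a b = V := by
  ext i a b
  simp [gaudinBasis, Finset.sum_apply, Pi.single_apply, ite_apply]

theorem fderiv_apply_eq_sum_mul_gaudinPDeriv (h : GaudinPhase N r → ℂ) (X V : GaudinPhase N r) :
    fderiv ℂ h X V = ∑ i, ∑ a, ∑ b, V i a b * gaudinPDeriv h i a b X := by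
  conv_lhs => rw [← sum_smul_gaudinBasis V]
  simp only [map_sum, map_smul, smul_eq_mul, gaudinPDeriv]

theorem gaudinPoisson_eq_sum_lie_mul (F G : GaudinPhase N r → ℂ) (X : GaudinPhase N r) :
    gaudinPoisson F G X =
      ∑ i, ∑ a, ∑ b, ⁅of (X i), (gaudinGrad G i X)ᵀ⁆ a b * gaudinPDeriv F i a b X :=
  sum_congr rfl fun i _ =>
    sum_lie_poisson_eq_sum_lie_mul (of (X i)) (gaudinGrad F i X) (gaudinGrad G i X)

variable {S : Finset (Fin N)} {h : GaudinPhase N r → ℂ}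

theorem DependsOnlyOn.gaudinPDeriv_eq_zero (hS : DependsOnlyOn S h) (hd : Differentiable ℂ h)
    {i : Fin N} (hi : i ∉ S) (a b : Fin r) (X : GaudinPhase N r) :
    gaudinPDeriv h i a b X = 0 := by
  have := fderiv_apply_eq_of_eventually_eq_on_lines (hd X) (p := gaudinBasis N r i a b) (q := 0)
    (Eventually.of_forall fun t => hS _ _ fun j hj => ?_)
  · simpa [gaudinPDeriv] using this
  · have hji : j ≠ i := by rintro rfl; exact hi hj
    simp [gaudinBasis, hji]

theorem DependsOnSumOver.gaudinGrad_eq (hS : DependsOnSumOver S h) (hd : Differentiable ℂ h)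
    {i j : Fin N} (hi : i ∈ S) (hj : j ∈ S) (X : GaudinPhase N r) :
    gaudinGrad h i X = gaudinGrad h j X := by
  ext a b
  refine fderiv_apply_eq_of_eventually_eq_on_lines (hd X)
    (Eventually.of_forall fun t => hS _ _ (fun l hl => ?_) ?_)
  · have hli : l ≠ i := by rintro rfl; exact hl hi
    have hlj : l ≠ j := by rintro rfl; exact hl hj
    simp [gaudinBasis, hli, hlj]
  · simp [gaudinBasis, sum_add_distrib, ← smul_sum, sum_pi_single', hi, hj]

theorem IsConjInvariant.fderiv_mul_left_eq (hinv : IsConjInvariant h) (hd : Differentiable ℂ h)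
    (X : GaudinPhase N r) (Y : Matrix (Fin r) (Fin r) ℂ) :
    fderiv ℂ h X (fun i => of.symm (Y * of (X i))) =
      fderiv ℂ h X (fun i => of.symm (of (X i) * Y)) := by
  refine fderiv_apply_eq_of_eventually_eq_on_lines (hd X) ?_
  have hdet : ∀ᶠ t : ℂ in 𝓝 0, (1 + t • Y).det ≠ 0 := by
    refine ContinuousAt.eventually_ne ?_ (by simp)
    exact (continuous_const.add (continuous_id.smul continuous_const)).matrix_det.continuousAt
  filter_upwards [hdet] with t ht
  -- conjugating `X i * g` by `g = 1 + t Y` gives `g * X i`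
  let g : GL (Fin r) ℂ := ((isUnit_iff_isUnit_det _).mpr (Ne.isUnit ht)).unit
  have hg : (g : Matrix (Fin r) (Fin r) ℂ) = 1 + t • Y := rfl
  have hconj (M : Matrix (Fin r) (Fin r) ℂ) :
      (g : Matrix (Fin r) (Fin r) ℂ) * (M * (g : Matrix (Fin r) (Fin r) ℂ)) *
        ((g⁻¹ : GL (Fin r) ℂ) : Matrix (Fin r) (Fin r) ℂ) = M + t • (Y * M) := by
    rw [mul_assoc, mul_assoc, Units.mul_inv, mul_one, hg, add_mul, one_mul, smul_mul_assoc]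
  convert hinv g (fun i => of.symm (of (X i) * (g : Matrix (Fin r) (Fin r) ℂ))) using 2
  · ext i a b
    rw [Equiv.apply_symm_apply, hconj]
    simp
  · ext i a b
    simp [hg, mul_add]

theorem gaudinPoisson_eq_zero {h₁ h₂ : GaudinPhase N r → ℂ}
    (hd₁ : Differentiable ℂ h₁) (hd₂ : Differentiable ℂ h₂) (hdep₁ : DependsOnlyOn S h₁)
    (hinv₁ : IsConjInvariant h₁) (hsum₂ : DependsOnSumOver S h₂) (X : GaudinPhase N r) :
    gaudinPoisson h₁ h₂ X = 0 := by
  obtain ⟨Y, hY⟩ : ∃ Y, ∀ i ∈ S, (gaudinGrad h₂ i X)ᵀ = Y := by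
    rcases S.eq_empty_or_nonempty with rfl | ⟨i₀, hi₀⟩
    · exact ⟨0, by simp⟩
    · exact ⟨_, fun i hi => congrArg transpose (hsum₂.gaudinGrad_eq hd₂ hi hi₀ X)⟩
  calc gaudinPoisson h₁ h₂ X
      = ∑ i, ∑ a, ∑ b, ⁅of (X i), Y⁆ a b * gaudinPDeriv h₁ i a b X := by
        rw [gaudinPoisson_eq_sum_lie_mul]
        refine sum_congr rfl fun i _ => ?_
        by_cases hi : i ∈ S
        · rw [hY i hi]
        · simp [hdep₁.gaudinPDeriv_eq_zero hd₁ hi]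
    _ = fderiv ℂ h₁ X (fun i => of.symm (of (X i) * Y)) -
          fderiv ℂ h₁ X (fun i => of.symm (Y * of (X i))) := by
        rw [fderiv_apply_eq_sum_mul_gaudinPDeriv, fderiv_apply_eq_sum_mul_gaudinPDeriv]
        simp only [Ring.lie_def, Matrix.sub_apply, sub_mul, sum_sub_distrib]
        rfl
    _ = 0 := by rw [hinv₁.fderiv_mul_left_eq hd₁, sub_self]

end GaudinPhase

section GluedLax

variable {N r : ℕ} (k : ℕ)

theorem dependsOnlyOn_comp_glueLax₁ (u : Fin N → ℂ) (v : ℂ) (f : Matrix (Fin r) (Fin r) ℂ → ℂ) :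
    DependsOnlyOn (univ.filter fun i : Fin N => k ≤ (i : ℕ))
      fun X : GaudinPhase N r => f (glueLax₁ k u v X) := by
  intro X Y hXY
  unfold glueLax₁
  exact congrArg f (sum_congr rfl fun i hi => by rw [hXY i hi])

theorem glueLax₁_conj (u : Fin N → ℂ) (v : ℂ) (g : GL (Fin r) ℂ) (X : GaudinPhase N r) :
    glueLax₁ k u v (fun i a b => ((g : Matrix (Fin r) (Fin r) ℂ) * of (X i) *
        ((g⁻¹ : GL (Fin r) ℂ) : Matrix (Fin r) (Fin r) ℂ)) a b) =
      (g : Matrix (Fin r) (Fin r) ℂ) * glueLax₁ k u v X *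
        ((g⁻¹ : GL (Fin r) ℂ) : Matrix (Fin r) (Fin r) ℂ) := by
  simp only [glueLax₁, mul_sum, sum_mul, mul_smul_comm, smul_mul_assoc]
  rfl

theorem isConjInvariant_trace_glueLax₁_pow (u : Fin N → ℂ) (v : ℂ) (m : ℕ) :
    IsConjInvariant fun X : GaudinPhase N r => trace (glueLax₁ k u v X ^ m) := by
  intro g X
  simp only [glueLax₁_conj, Units.conj_pow, trace_units_conj]

theorem glueLax₂_eq_of_sum_eq (z : Fin N → ℂ) (w v : ℂ) {X Y : GaudinPhase N r}
    (hout : ∀ i ∉ univ.filter fun i : Fin N => k ≤ (i : ℕ), X i = Y i)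
    (hsum : ∑ i ∈ univ.filter (fun i : Fin N => k ≤ (i : ℕ)), X i =
      ∑ i ∈ univ.filter (fun i : Fin N => k ≤ (i : ℕ)), Y i) :
    glueLax₂ k z w v X = glueLax₂ k z w v Y := by
  unfold glueLax₂
  congr 1
  · exact sum_congr rfl fun i hi => by rw [hout i (by simpa using hi)]
  · exact congrArg _ hsum

theorem dependsOnSumOver_comp_glueLax₂ (z : Fin N → ℂ) (w : ℂ)
    (f : (ℂ → Matrix (Fin r) (Fin r) ℂ) → ℂ) :
    DependsOnSumOver (univ.filter fun i : Fin N => k ≤ (i : ℕ))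
      fun X : GaudinPhase N r => f fun v => glueLax₂ k z w v X :=
  fun _ _ hout hsum => congrArg f (funext fun v => glueLax₂_eq_of_sum_eq k z w v hout hsum)

theorem differentiable_glueLax₁_apply (u : Fin N → ℂ) (v : ℂ) (a b : Fin r) :
    Differentiable ℂ fun X : GaudinPhase N r => glueLax₁ k u v X a b := by
  simp only [glueLax₁, Matrix.sum_apply, Matrix.smul_apply, of_apply, smul_eq_mul]
  fun_prop

theorem differentiable_glueLax₂_apply (z : Fin N → ℂ) (w v : ℂ) (a b : Fin r) :
    Differentiable ℂ fun X : GaudinPhase N r => glueLax₂ k z w v X a b := by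
  simp only [glueLax₂, Matrix.add_apply, Matrix.sum_apply, Matrix.smul_apply, of_apply,
    smul_eq_mul]
  fun_prop

end GluedLax

theorem glued_gaudin_poisson_commute_general
    {N r : ℕ} (k : ℕ)
    (z u : Fin N → ℂ) (w : ℂ)
    (h₁ h₂ : GaudinPhase N r → ℂ)
    (hd₁ : Differentiable ℂ h₁) (hd₂ : Differentiable ℂ h₂)
    -- `h₁` depends only on `X_{k+1}, …, X_N`:
    (hdep₁ : ∀ X Y : GaudinPhase N r, (∀ i : Fin N, k ≤ (i : ℕ) → X i = Y i) → h₁ X = h₁ Y)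
    -- `h₁` is invariant under the diagonal adjoint action of `GL(r)`:
    (hinv₁ : ∀ g : GL (Fin r) ℂ, ∀ X : GaudinPhase N r,
      h₁ (fun i a b =>
        ((g : Matrix (Fin r) (Fin r) ℂ) * Matrix.of (X i) *
          ((g⁻¹ : GL (Fin r) ℂ) : Matrix (Fin r) (Fin r) ℂ)) a b) = h₁ X)
    -- `h₂` is built from the spectral invariants of `L₂`:
    (hspec₂ : ∃ Φ : (ℂ → ℕ → ℂ) → ℂ, ∀ X : GaudinPhase N r,
      h₂ X = Φ (fun v m => Matrix.trace (glueLax₂ k z w v X ^ m))) :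
    (∀ X : GaudinPhase N r, gaudinPoisson h₁ h₂ X = 0) ∧
    (∀ u₀ v₀ : ℂ, (∀ i : Fin N, k ≤ (i : ℕ) → u₀ ≠ u i) →
      (∀ i : Fin N, (i : ℕ) < k → v₀ ≠ z i) → v₀ ≠ w →
      ∀ (m n : ℕ) (X : GaudinPhase N r),
        gaudinPoisson (fun X => Matrix.trace (glueLax₁ k u u₀ X ^ m))
          (fun X => Matrix.trace (glueLax₂ k z w v₀ X ^ n)) X = 0) := by
  refine ⟨fun X => ?_, fun u₀ v₀ _ _ _ m n X => ?_⟩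
  · obtain ⟨Φ, hΦ⟩ := hspec₂
    obtain rfl : h₂ = fun X => Φ fun v m => trace (glueLax₂ k z w v X ^ m) := funext hΦ
    exact gaudinPoisson_eq_zero hd₁ hd₂
      (fun X Y hXY => hdep₁ X Y fun i hi => hXY i (mem_filter.mpr ⟨mem_univ i, hi⟩)) hinv₁
      (dependsOnSumOver_comp_glueLax₂ k z w fun L => Φ fun v m => trace (L v ^ m)) X
  · exact gaudinPoisson_eq_zero
      (Differentiable.matrix_trace_pow (differentiable_glueLax₁_apply k u u₀) m)
      (Differentiable.matrix_trace_pow (differentiable_glueLax₂_apply k z w v₀) n)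
      (dependsOnlyOn_comp_glueLax₁ k u u₀ fun L => trace (L ^ m))
      (isConjInvariant_trace_glueLax₁_pow k u u₀ m)
      (dependsOnSumOver_comp_glueLax₂ k z w fun L => trace (L v₀ ^ n)) X

/-- Poisson commutativity of the glued Gaudin families.  On `gl(r)^N` with the product
Lie–Poisson bracket, any (differentiable) function `h₂` which depends on `X_1, …, X_k` only
through their sum and is built from the spectral invariants of `L₂`, Poisson-commutes with
any (differentiable) function `h₁` which depends only on `X_{k+1}, …, X_N` and is invariant
under the diagonal adjoint action of `GL(r)`.  In particular,
`{Tr (L₁(u₀)^m), Tr (L₂(v₀)^n)} = 0`. -/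
theorem glued_gaudin_poisson_commute
    {N r : ℕ} (k : ℕ) (hk1 : 1 ≤ k) (hkN : k < N)
    (z u : Fin N → ℂ) (w : ℂ)
    (hz : ∀ i j : Fin N, (i : ℕ) < k → (j : ℕ) < k → z i = z j → i = j)
    (hw : ∀ i : Fin N, (i : ℕ) < k → w ≠ z i)
    (hu : ∀ i j : Fin N, k ≤ (i : ℕ) → k ≤ (j : ℕ) → u i = u j → i = j)
    (h₁ h₂ : GaudinPhase N r → ℂ)
    (hd₁ : Differentiable ℂ h₁) (hd₂ : Differentiable ℂ h₂)
    -- `h₁` depends only on `X_{k+1}, …, X_N`: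
    (hdep₁ : ∀ X Y : GaudinPhase N r, (∀ i : Fin N, k ≤ (i : ℕ) → X i = Y i) → h₁ X = h₁ Y)
    -- `h₁` is invariant under the diagonal adjoint action of `GL(r)`:
    (hinv₁ : ∀ g : GL (Fin r) ℂ, ∀ X : GaudinPhase N r,
      h₁ (fun i a b =>
        ((g : Matrix (Fin r) (Fin r) ℂ) * Matrix.of (X i) *
          ((g⁻¹ : GL (Fin r) ℂ) : Matrix (Fin r) (Fin r) ℂ)) a b) = h₁ X)
    -- `h₂` depends on `X_1, …, X_k` only through their sum:
    (hsum₂ : ∀ X Y : GaudinPhase N r,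
      (∑ i ∈ Finset.univ.filter (fun i : Fin N => (i : ℕ) < k), Matrix.of (X i)) =
        (∑ i ∈ Finset.univ.filter (fun i : Fin N => (i : ℕ) < k), Matrix.of (Y i)) →
      (∀ i : Fin N, k ≤ (i : ℕ) → X i = Y i) → h₂ X = h₂ Y)
    -- `h₂` is built from the spectral invariants of `L₂`:
    (hspec₂ : ∃ Φ : (ℂ → ℕ → ℂ) → ℂ, ∀ X : GaudinPhase N r,
      h₂ X = Φ (fun v m => Matrix.trace (glueLax₂ k z w v X ^ m))) :
    (∀ X : GaudinPhase N r, gaudinPoisson h₁ h₂ X = 0) ∧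
    (∀ u₀ v₀ : ℂ, (∀ i : Fin N, k ≤ (i : ℕ) → u₀ ≠ u i) →
      (∀ i : Fin N, (i : ℕ) < k → v₀ ≠ z i) → v₀ ≠ w →
      ∀ (m n : ℕ) (X : GaudinPhase N r),
        gaudinPoisson (fun X => Matrix.trace (glueLax₁ k u u₀ X ^ m))
          (fun X => Matrix.trace (glueLax₂ k z w v₀ X ^ n)) X = 0) :=
  glued_gaudin_poisson_commute_general k z u w h₁ h₂ hd₁ hd₂ hdep₁ hinv₁ hspec₂
end
end

section
/- Spectral invariants of the classical Gaudin Lax matrix Poisson-commute: on gl(r)^N with the product Lie–Poisson bracket, for pairwise distinct z_1,…,z_N and any points u,v ∈ ℂ \ {z_1,…,z_N} and any m,n ≥ 1, one has {Tr(L_G(u)^m), Tr(L_G(v)^n)} = 0 where L_G(z) = Σ_i X_i/(z−z_i). -/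
noncomputable section

/-- The classical Gaudin Lax matrix `L_G(ζ) = ∑ i, X i / (ζ - z i)`. -/
def gaudinLax {N r : ℕ} (z : Fin N → ℂ) (ζ : ℂ) (X : GaudinPhase N r) :
    Matrix (Fin r) (Fin r) ℂ :=
  ∑ i : Fin N, (ζ - z i)⁻¹ • Matrix.of (X i)

/-! The differential of `Tr L(ζ)^m` at the `i`-th site is `(ζ - z i)⁻¹ A` with `A = m L(ζ)^(m-1)`,
so the Lie–Poisson bracket of `Tr L(u)^m` and `Tr L(v)^n` is `∑ i (u - z i)⁻¹ (v - z i)⁻¹ Tr(X i ⁅B, A⁆)`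
with `B = n L(v)^(n-1)`. For `u ≠ v`, partial fractions turn this into
`(v - u)⁻¹ (Tr(L(u) ⁅B, A⁆) - Tr(L(v) ⁅B, A⁆))`, and both traces vanish because `L(u)` commutes
with `A` and `L(v)` with `B`. For `u = v`, `A` and `B` are powers of one matrix, so `⁅B, A⁆ = 0`. -/

open Matrix

section TraceIdentities

variable {ι R : Type*} [Fintype ι] [CommRing R]

theorem Matrix.trace_mul_lie_eq_zero_of_commute_left {M A : Matrix ι ι R} (h : Commute M A)
    (B : Matrix ι ι R) : (M * ⁅A, B⁆).trace = 0 := by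
  rw [Ring.lie_def, Matrix.mul_sub, trace_sub, sub_eq_zero, ← Matrix.mul_assoc, h.eq,
    Matrix.mul_assoc, trace_mul_comm, Matrix.mul_assoc]

theorem Matrix.trace_mul_lie_eq_zero_of_commute_right {M B : Matrix ι ι R} (h : Commute M B)
    (A : Matrix ι ι R) : (M * ⁅A, B⁆).trace = 0 := by
  rw [Ring.lie_def, Matrix.mul_sub, trace_sub, sub_eq_zero, ← Matrix.mul_assoc M B A, h.eq,
    Matrix.mul_assoc, trace_mul_comm B, Matrix.mul_assoc]

theorem Matrix.sum_liePoisson_coeff_mul [DecidableEq ι] (Y A B : Matrix ι ι R) :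
    ∑ a, ∑ b, ∑ c, ∑ d,
      ((if c = b then Y a d else 0) - (if a = d then Y c b else 0)) * A b a * B d c
      = (Y * ⁅B, A⁆).trace := by
  rw [Ring.lie_def, Matrix.mul_sub, trace_sub, ← Matrix.mul_assoc, ← Matrix.mul_assoc]
  simp only [sub_mul, ite_mul, zero_mul, Finset.sum_sub_distrib, Finset.sum_ite_irrel,
    Finset.sum_const_zero, Finset.sum_ite_eq, Finset.sum_ite_eq', Finset.mem_univ, if_true,
    trace, diag, mul_apply, Finset.sum_mul]
  congr 1
  · exact Fintype.sum_congr _ _ fun a ↦ Fintype.sum_congr _ _ fun b ↦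
      Fintype.sum_congr _ _ fun d ↦ by ring
  · conv_rhs => rw [Finset.sum_comm]
    refine Fintype.sum_congr _ _ fun _ ↦ ?_
    rw [Finset.sum_comm]

end TraceIdentities

-- Matrices carry no global norm; in finite dimension every choice gives the same derivatives.
attribute [local instance] Matrix.linftyOpNormedAddCommGroup Matrix.linftyOpNormedRing
  Matrix.linftyOpNormedAlgebra

theorem fderiv_trace_pow_apply {𝕜 ι E : Type*} [NontriviallyNormedField 𝕜] [CompleteSpace 𝕜]
    [Fintype ι] [DecidableEq ι] [NormedAddCommGroup E] [NormedSpace 𝕜 E]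
    {f : E → Matrix ι ι 𝕜} {f' : E →L[𝕜] Matrix ι ι 𝕜} {x : E} (hf : HasFDerivAt f f' x)
    (m : ℕ) (e : E) :
    fderiv 𝕜 (fun y ↦ (f y ^ m).trace) x e = ((m : 𝕜) • f x ^ (m - 1) * f' e).trace := by
  have hpow : HasFDerivAt (fun y ↦ (f y ^ m).trace) _ x :=
    (traceLinearMap ι 𝕜 𝕜).toContinuousLinearMap.hasFDerivAt.comp x (hf.fun_pow' m)
  rw [hpow.fderiv]
  change ((∑ k ∈ Finset.range m, MulOpposite.op (f x ^ k) • f x ^ (m.pred - k) • f') e).trace = _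
  simp only [_root_.sum_apply, _root_.smul_apply, MulOpposite.smul_eq_mul_unop, smul_eq_mul,
    MulOpposite.unop_op, trace_sum, smul_mul_assoc, trace_smul]
  calc _ = ∑ _k ∈ Finset.range m, (f x ^ (m - 1) * f' e).trace := by
        refine Finset.sum_congr rfl fun k hk ↦ ?_
        rw [trace_mul_cycle, ← pow_add, Nat.pred_eq_sub_one,
          Nat.add_sub_of_le (Nat.le_sub_one_of_lt (Finset.mem_range.mp hk))]
    _ = _ := by simp

section Gaudin

variable {N r : ℕ}

theorem gaudinPoisson_eq_sum_trace {F G : GaudinPhase N r → ℂ} {X : GaudinPhase N r}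
    (α β : Fin N → ℂ) (A B : Matrix (Fin r) (Fin r) ℂ)
    (hF : ∀ i a b, gaudinPDeriv F i a b X = α i * A b a)
    (hG : ∀ i c d, gaudinPDeriv G i c d X = β i * B d c) :
    gaudinPoisson F G X = ∑ i, α i * β i * (Matrix.of (X i) * ⁅B, A⁆).trace := by
  unfold gaudinPoisson
  refine Finset.sum_congr rfl fun i _ ↦ ?_
  simp only [hF, hG, ← sum_liePoisson_coeff_mul, Finset.mul_sum, of_apply]
  congr! 4
  ring

@[simps]
def gaudinLaxLinearMap (z : Fin N → ℂ) (ζ : ℂ) :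
    GaudinPhase N r →ₗ[ℂ] Matrix (Fin r) (Fin r) ℂ where
  toFun := gaudinLax z ζ
  map_add' X Y := by
    simp [gaudinLax, ← Finset.sum_add_distrib, smul_add, Matrix.of_add_of]
  map_smul' c X := by
    simp [gaudinLax, Finset.smul_sum, smul_comm c]

theorem gaudinLax_gaudinBasis (z : Fin N → ℂ) (ζ : ℂ) (i : Fin N) (a b : Fin r) :
    gaudinLax z ζ (gaudinBasis N r i a b) = (ζ - z i)⁻¹ • Matrix.single a b 1 := by
  rw [gaudinLax, Finset.sum_eq_single i]
  · simp [gaudinBasis, single_eq_of_single_single]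
  · intro j _ hj
    simp [gaudinBasis, hj]
  · simp

theorem gaudinPDeriv_trace_gaudinLax_pow (z : Fin N → ℂ) (ζ : ℂ) (m : ℕ) (i : Fin N)
    (a b : Fin r) (X : GaudinPhase N r) :
    gaudinPDeriv (fun X ↦ (gaudinLax z ζ X ^ m).trace) i a b X
      = (ζ - z i)⁻¹ * ((m : ℂ) • gaudinLax z ζ X ^ (m - 1)) b a := by
  have hL : HasFDerivAt (gaudinLax z ζ) (gaudinLaxLinearMap z ζ).toContinuousLinearMap X :=
    (gaudinLaxLinearMap z ζ).toContinuousLinearMap.hasFDerivAt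
  simp only [gaudinPDeriv, fderiv_trace_pow_apply hL, LinearMap.coe_toContinuousLinearMap',
    gaudinLaxLinearMap_apply, gaudinLax_gaudinBasis, mul_smul_comm, trace_smul, trace_mul_single,
    MulOpposite.op_one, one_smul, smul_eq_mul]

theorem trace_gaudinLax_mul (z : Fin N → ℂ) (ζ : ℂ) (X : GaudinPhase N r)
    (C : Matrix (Fin r) (Fin r) ℂ) :
    (gaudinLax z ζ X * C).trace = ∑ i, (ζ - z i)⁻¹ * (Matrix.of (X i) * C).trace := by
  simp only [gaudinLax, Finset.sum_mul, trace_sum, smul_mul_assoc, trace_smul, smul_eq_mul]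

theorem sum_inv_sub_mul_inv_sub_mul_trace {z : Fin N → ℂ} {u v : ℂ} (hu : ∀ i, u ≠ z i)
    (hv : ∀ i, v ≠ z i) (huv : u ≠ v) (X : GaudinPhase N r) (C : Matrix (Fin r) (Fin r) ℂ) :
    ∑ i, (u - z i)⁻¹ * (v - z i)⁻¹ * (Matrix.of (X i) * C).trace
      = (v - u)⁻¹ * ((gaudinLax z u X * C).trace - (gaudinLax z v X * C).trace) := by
  rw [trace_gaudinLax_mul, trace_gaudinLax_mul, ← Finset.sum_sub_distrib, Finset.mul_sum]
  refine Finset.sum_congr rfl fun i _ ↦ ?_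
  have := sub_ne_zero.mpr (hu i)
  have := sub_ne_zero.mpr (hv i)
  have := sub_ne_zero.mpr huv.symm
  field_simp
  ring

end Gaudin

theorem gaudin_spectral_invariants_poisson_commute_general
    {N r : ℕ} (z : Fin N → ℂ)
    (u v : ℂ) (hu : ∀ i, u ≠ z i) (hv : ∀ i, v ≠ z i)
    (m n : ℕ) :
    ∀ X : GaudinPhase N r,
      gaudinPoisson (fun X => Matrix.trace (gaudinLax z u X ^ m))
        (fun X => Matrix.trace (gaudinLax z v X ^ n)) X = 0 := by
  intro X
  rw [gaudinPoisson_eq_sum_trace _ _ _ _ (gaudinPDeriv_trace_gaudinLax_pow z u m · · · X)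
    (gaudinPDeriv_trace_gaudinLax_pow z v n · · · X)]
  rcases eq_or_ne u v with rfl | huv
  · have hBA : Commute ((n : ℂ) • gaudinLax z u X ^ (n - 1))
        ((m : ℂ) • gaudinLax z u X ^ (m - 1)) :=
      ((Commute.pow_pow_self _ _ _).smul_left _).smul_right _
    simp [commute_iff_lie_eq.mp hBA]
  · rw [sum_inv_sub_mul_inv_sub_mul_trace hu hv huv,
      trace_mul_lie_eq_zero_of_commute_right ((Commute.self_pow _ _).smul_right _),
      trace_mul_lie_eq_zero_of_commute_left ((Commute.self_pow _ _).smul_right _), sub_self,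
      mul_zero]

/-- Spectral invariants of the classical Gaudin Lax matrix Poisson-commute: on `gl(r)^N`
with the product Lie–Poisson bracket, for pairwise distinct `z 1, …, z N`, points
`u, v ∉ {z i}` and `m, n ≥ 1`, one has `{Tr (L_G(u)^m), Tr (L_G(v)^n)} = 0`. -/
theorem gaudin_spectral_invariants_poisson_commute
    {N r : ℕ} (z : Fin N → ℂ) (hz : Function.Injective z)
    (u v : ℂ) (hu : ∀ i, u ≠ z i) (hv : ∀ i, v ≠ z i)
    (m n : ℕ) (hm : 1 ≤ m) (hn : 1 ≤ n) :
    ∀ X : GaudinPhase N r,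
      gaudinPoisson (fun X => Matrix.trace (gaudinLax z u X ^ m))
        (fun X => Matrix.trace (gaudinLax z v X ^ n)) X = 0 :=
  gaudin_spectral_invariants_poisson_commute_general z u v hu hv m n

end
end
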